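/- arXiv:1412.8267 — 4 statements merged into one kernel-verified Lean document; each statement's English description precedes it below -/
import Mathlib

section
/- Let $\alpha_0>1$, $\alpha_1<1$, $\alpha_2<1$, $\beta_1<1$, $\beta_2<1$, and set $\gamma_i=(1-\alpha_i)/(1-\beta_i)>0$ for $i=1,2$ with $\gamma_1\geq\gamma_2$. Suppose $F:[1,\infty)\to[0,\infty)$ is continuously differentiable and satisfies $F'(t)\leq C_0 t^{-\alpha_0}F(t)+C_1 t^{-\alpha_1}F(t)^{\beta_1}+C_2 t^{-\alpha_2}F(t)^{\beta_2}+C_3 t^{\gamma_2-1}$ for all $t\geq 1$, with $F(1)\leq K_0$, where $C_0,C_1,C_2,C_3,K_0\geq 0$. Then there exists a constant $C^*$ (depending on the parameters and constants) such that $F(t)\leq C^* t^{\gamma_1}$ for all $t\geq 1$. -/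
/-- Gronwall-type differential inequality lemma (Lemma 2.1 / `bwp1`). -/
theorem stmt_0 (α₀ α₁ α₂ β₁ β₂ γ₁ γ₂ C₀ C₁ C₂ C₃ K₀ : ℝ)
    (hα₀ : 1 < α₀) (hα₁ : α₁ < 1) (hα₂ : α₂ < 1) (hβ₁ : β₁ < 1) (hβ₂ : β₂ < 1)
    (hγ₁ : γ₁ = (1 - α₁) / (1 - β₁)) (hγ₂ : γ₂ = (1 - α₂) / (1 - β₂))
    (hγ₁pos : 0 < γ₁) (hγ₂pos : 0 < γ₂) (hγ : γ₂ ≤ γ₁)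
    (hC₀ : 0 ≤ C₀) (hC₁ : 0 ≤ C₁) (hC₂ : 0 ≤ C₂) (hC₃ : 0 ≤ C₃) (hK₀ : 0 ≤ K₀)
    (F F' : ℝ → ℝ)
    (hFnonneg : ∀ t, 1 ≤ t → 0 ≤ F t)
    (hFderiv : ∀ t, 1 ≤ t → HasDerivAt F (F' t) t)
    (hF'cont : ContinuousOn F' (Set.Ici 1))
    (hineq : ∀ t, 1 ≤ t →
      F' t ≤ C₀ * t ^ (-α₀) * F t + C₁ * t ^ (-α₁) * (F t) ^ β₁
        + C₂ * t ^ (-α₂) * (F t) ^ β₂ + C₃ * t ^ (γ₂ - 1))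
    (hinit : F 1 ≤ K₀) :
    ∃ Cstar : ℝ, ∀ t, 1 ≤ t → F t ≤ Cstar * t ^ γ₁ := by
  have hFcont : ContinuousOn F (Set.Ici 1) :=
    fun t ht => ((hFderiv t ht).continuousAt).continuousWithinAt
  -- exponent identities
  have hb₁ : 0 < 1 - β₁ := by linarith
  have hb₂ : 0 < 1 - β₂ := by linarith
  have hγ₁eq : γ₁ * (1 - β₁) = 1 - α₁ := by
    rw [hγ₁]; field_simp
  have hγ₂eq : γ₂ * (1 - β₂) = 1 - α₂ := by
    rw [hγ₂]; field_simp
  have he₁ : γ₁ * β₁ - α₁ = γ₁ - 1 := by nlinarith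
  have he₂ : γ₁ * β₂ - α₂ ≤ γ₁ - 1 := by nlinarith [mul_le_mul_of_nonneg_right hγ hb₂.le]
  -- choose T₀ such that C₀ * t ^ (1 - α₀) ≤ γ₁ / 2 for t ≥ T₀
  obtain ⟨T₀, hT₀1, hT₀⟩ : ∃ T₀ : ℝ, 1 ≤ T₀ ∧ ∀ t, T₀ ≤ t → C₀ * t ^ (1 - α₀) ≤ γ₁ / 2 := by
    have h0 : Filter.Tendsto (fun t : ℝ => C₀ * t ^ (1 - α₀)) Filter.atTop (nhds 0) := by
      have := (tendsto_rpow_neg_atTop (y := α₀ - 1) (by linarith)).const_mul C₀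
      simpa [mul_zero, neg_sub] using this
    have hev : ∀ᶠ t in Filter.atTop, C₀ * t ^ (1 - α₀) < γ₁ / 2 :=
      h0.eventually_lt_const (by linarith)
    obtain ⟨T, hT⟩ := Filter.eventually_atTop.mp hev
    exact ⟨max 1 T, le_max_left _ _,
      fun t ht => (hT t ((le_max_right _ _).trans ht)).le⟩
  -- bound F on [1, T₀]
  obtain ⟨B0, hB0⟩ : ∃ B0 : ℝ, ∀ t ∈ Set.Icc (1:ℝ) T₀, F t ≤ B0 := by
    obtain ⟨B0, hB0⟩ := (isCompact_Icc (a := (1:ℝ)) (b := T₀)).exists_bound_of_continuousOn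
      (hFcont.mono (fun x hx => hx.1))
    exact ⟨B0, fun t ht => (le_abs_self _).trans (by simpa using hB0 t ht)⟩
  set b : ℝ := max β₁ (max β₂ 0) with hbdef
  have hblt : b < 1 := by
    simp only [hbdef, max_lt_iff]
    exact ⟨hβ₁, hβ₂, one_pos⟩
  -- choose M
  obtain ⟨M, hM1, hMB, hMstrict⟩ : ∃ M : ℝ, 1 ≤ M ∧ B0 ≤ M ∧
      (C₁ + C₂) * M ^ b + C₃ < γ₁ / 2 * M := by
    have h1 : Filter.Tendsto (fun M : ℝ => (C₁ + C₂) * M ^ (b - 1) + C₃ * M ^ (-1:ℝ))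
        Filter.atTop (nhds 0) := by
      have t1 := (tendsto_rpow_neg_atTop (y := 1 - b) (by linarith)).const_mul (C₁ + C₂)
      have t2 := (tendsto_rpow_neg_atTop (y := (1:ℝ)) one_pos).const_mul C₃
      have := t1.add t2
      simpa [neg_sub, mul_zero] using this
    have hev : ∀ᶠ M in Filter.atTop,
        (C₁ + C₂) * M ^ (b - 1) + C₃ * M ^ (-1:ℝ) < γ₁ / 2 :=
      h1.eventually_lt_const (by linarith)
    obtain ⟨N, hN⟩ := Filter.eventually_atTop.mp hev
    set M := max N (max 1 B0) with hMdef
    have hM1 : (1:ℝ) ≤ M := (le_max_left _ _).trans (le_max_right _ _)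
    have hMpos : (0:ℝ) < M := lt_of_lt_of_le one_pos hM1
    have key := hN M (le_max_left _ _)
    have := mul_lt_mul_of_pos_right key hMpos
    refine ⟨M, hM1, (le_max_right _ _).trans (le_max_right _ _), ?_⟩
    have e1 : M ^ (b - 1) = M ^ b / M := by
      rw [Real.rpow_sub hMpos, Real.rpow_one]
    have e2 : M ^ (-1:ℝ) = M⁻¹ := by
      rw [Real.rpow_neg hMpos.le, Real.rpow_one]
    calc (C₁ + C₂) * M ^ b + C₃
        = ((C₁ + C₂) * M ^ (b - 1) + C₃ * M ^ (-1:ℝ)) * M := by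
          rw [e1, e2]; field_simp
      _ < γ₁ / 2 * M := this
  have hMpos : (0:ℝ) < M := lt_of_lt_of_le one_pos hM1
  refine ⟨M, fun t ht => ?_⟩
  have htpos : (0:ℝ) < t := lt_of_lt_of_le one_pos ht
  have hrpow1 : (1:ℝ) ≤ t ^ γ₁ := by
    calc (1:ℝ) = t ^ (0:ℝ) := (Real.rpow_zero t).symm
    _ ≤ t ^ γ₁ := Real.rpow_le_rpow_of_exponent_le ht hγ₁pos.le
  rcases le_total t T₀ with hle | hge
  · -- easy region
    have : F t ≤ B0 := hB0 t ⟨ht, hle⟩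
    calc F t ≤ M := this.trans hMB
    _ = M * 1 := (mul_one M).symm
    _ ≤ M * t ^ γ₁ := by nlinarith
  · -- comparison region [T₀, t]
    have key : ∀ x ∈ Set.Icc T₀ t, F x ≤ M * x ^ γ₁ := by
      apply image_le_of_deriv_right_lt_deriv_boundary' (f' := F')
        (B := fun x => M * x ^ γ₁) (B' := fun x => M * (γ₁ * x ^ (γ₁ - 1)))
      · exact hFcont.mono (fun x hx => le_trans hT₀1 hx.1)
      · intro x hx
        exact (hFderiv x (le_trans hT₀1 hx.1)).hasDerivWithinAt
      · -- F T₀ ≤ M * T₀ ^ γ₁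
        have h1 : F T₀ ≤ M := (hB0 T₀ ⟨hT₀1, le_refl _⟩).trans hMB
        have h2 : (1:ℝ) ≤ T₀ ^ γ₁ := by
          calc (1:ℝ) = T₀ ^ (0:ℝ) := (Real.rpow_zero T₀).symm
          _ ≤ T₀ ^ γ₁ := Real.rpow_le_rpow_of_exponent_le hT₀1 hγ₁pos.le
        nlinarith
      · intro x hx
        have hxpos : (0:ℝ) < x := lt_of_lt_of_le (lt_of_lt_of_le one_pos hT₀1) hx.1
        exact (continuousAt_const.mul
          (Real.continuousAt_rpow_const x γ₁ (Or.inl hxpos.ne'))).continuousWithinAt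
      · intro x hx
        have hxpos : (0:ℝ) < x := lt_of_lt_of_le (lt_of_lt_of_le one_pos hT₀1) hx.1
        exact ((Real.hasDerivAt_rpow_const (Or.inl hxpos.ne')).const_mul M).hasDerivWithinAt
      · -- contact estimate
        intro x hx hcontact
        have hx1 : (1:ℝ) ≤ x := le_trans hT₀1 hx.1
        have hxpos : (0:ℝ) < x := lt_of_lt_of_le one_pos hx1
        have hxγpos : (0:ℝ) < x ^ γ₁ := Real.rpow_pos_of_pos hxpos _
        have hFx : F x = M * x ^ γ₁ := hcontact
        have hxg1pos : (0:ℝ) < x ^ (γ₁ - 1) := Real.rpow_pos_of_pos hxpos _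
        -- rewrite each term
        have hterm0 : C₀ * x ^ (-α₀) * F x ≤ γ₁ / 2 * M * x ^ (γ₁ - 1) := by
          rw [hFx]
          have hmul : ∀ u v : ℝ, x ^ u * x ^ v = x ^ (u + v) :=
            fun u v => (Real.rpow_add hxpos u v).symm
          have : C₀ * x ^ (-α₀) * (M * x ^ γ₁) = (C₀ * x ^ (1 - α₀)) * (M * x ^ (γ₁ - 1)) := by
            calc C₀ * x ^ (-α₀) * (M * x ^ γ₁) = C₀ * M * (x ^ (-α₀) * x ^ γ₁) := by ring
            _ = C₀ * M * x ^ (-α₀ + γ₁) := by rw [hmul]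
            _ = C₀ * M * x ^ ((1 - α₀) + (γ₁ - 1)) := by ring_nf
            _ = C₀ * M * (x ^ (1 - α₀) * x ^ (γ₁ - 1)) := by rw [hmul]
            _ = (C₀ * x ^ (1 - α₀)) * (M * x ^ (γ₁ - 1)) := by ring
          rw [this]
          have h := hT₀ x hx.1
          have hMx : (0:ℝ) ≤ M * x ^ (γ₁ - 1) := by positivity
          calc (C₀ * x ^ (1 - α₀)) * (M * x ^ (γ₁ - 1)) ≤ γ₁ / 2 * (M * x ^ (γ₁ - 1)) :=
            mul_le_mul_of_nonneg_right h hMx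
          _ = γ₁ / 2 * M * x ^ (γ₁ - 1) := by ring
        have hMb₁ : M ^ β₁ ≤ M ^ b :=
          Real.rpow_le_rpow_of_exponent_le hM1 (le_max_left _ _)
        have hMb₂ : M ^ β₂ ≤ M ^ b :=
          Real.rpow_le_rpow_of_exponent_le hM1 ((le_max_left _ _).trans (le_max_right _ _))
        have hterm1 : C₁ * x ^ (-α₁) * (F x) ^ β₁ ≤ C₁ * M ^ b * x ^ (γ₁ - 1) := by
          rw [hFx, Real.mul_rpow hMpos.le hxγpos.le, ← Real.rpow_mul hxpos.le]
          have heq : C₁ * x ^ (-α₁) * (M ^ β₁ * x ^ (γ₁ * β₁))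
              = C₁ * M ^ β₁ * x ^ (γ₁ * β₁ - α₁) := by
            rw [sub_eq_add_neg, Real.rpow_add hxpos]
            ring
          rw [heq, he₁]
          have : C₁ * M ^ β₁ ≤ C₁ * M ^ b := mul_le_mul_of_nonneg_left hMb₁ hC₁
          exact mul_le_mul_of_nonneg_right this hxg1pos.le
        have hterm2 : C₂ * x ^ (-α₂) * (F x) ^ β₂ ≤ C₂ * M ^ b * x ^ (γ₁ - 1) := by
          rw [hFx, Real.mul_rpow hMpos.le hxγpos.le, ← Real.rpow_mul hxpos.le]
          have heq : C₂ * x ^ (-α₂) * (M ^ β₂ * x ^ (γ₁ * β₂))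
              = C₂ * M ^ β₂ * x ^ (γ₁ * β₂ - α₂) := by
            rw [sub_eq_add_neg, Real.rpow_add hxpos]
            ring
          rw [heq]
          have h1 : x ^ (γ₁ * β₂ - α₂) ≤ x ^ (γ₁ - 1) :=
            Real.rpow_le_rpow_of_exponent_le hx1 he₂
          have h2 : (0:ℝ) ≤ C₂ * M ^ β₂ := by positivity
          calc C₂ * M ^ β₂ * x ^ (γ₁ * β₂ - α₂) ≤ C₂ * M ^ β₂ * x ^ (γ₁ - 1) :=
            mul_le_mul_of_nonneg_left h1 h2
          _ ≤ C₂ * M ^ b * x ^ (γ₁ - 1) :=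
            mul_le_mul_of_nonneg_right (mul_le_mul_of_nonneg_left hMb₂ hC₂) hxg1pos.le
        have hterm3 : C₃ * x ^ (γ₂ - 1) ≤ C₃ * x ^ (γ₁ - 1) :=
          mul_le_mul_of_nonneg_left
            (Real.rpow_le_rpow_of_exponent_le hx1 (by linarith)) hC₃
        have hsum : F' x ≤ γ₁ / 2 * M * x ^ (γ₁ - 1)
            + ((C₁ + C₂) * M ^ b + C₃) * x ^ (γ₁ - 1) := by
          have := hineq x hx1
          calc F' x ≤ C₀ * x ^ (-α₀) * F x + C₁ * x ^ (-α₁) * (F x) ^ β₁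
              + C₂ * x ^ (-α₂) * (F x) ^ β₂ + C₃ * x ^ (γ₂ - 1) := this
          _ ≤ γ₁ / 2 * M * x ^ (γ₁ - 1) + C₁ * M ^ b * x ^ (γ₁ - 1)
              + C₂ * M ^ b * x ^ (γ₁ - 1) + C₃ * x ^ (γ₁ - 1) := by
            exact add_le_add (add_le_add (add_le_add hterm0 hterm1) hterm2) hterm3
          _ = γ₁ / 2 * M * x ^ (γ₁ - 1) + ((C₁ + C₂) * M ^ b + C₃) * x ^ (γ₁ - 1) := by
            ring
        have hstrict : ((C₁ + C₂) * M ^ b + C₃) * x ^ (γ₁ - 1)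
            < γ₁ / 2 * M * x ^ (γ₁ - 1) :=
          mul_lt_mul_of_pos_right hMstrict hxg1pos
        calc F' x ≤ γ₁ / 2 * M * x ^ (γ₁ - 1)
            + ((C₁ + C₂) * M ^ b + C₃) * x ^ (γ₁ - 1) := hsum
        _ < γ₁ / 2 * M * x ^ (γ₁ - 1) + γ₁ / 2 * M * x ^ (γ₁ - 1) := by linarith
        _ = M * (γ₁ * x ^ (γ₁ - 1)) := by ring
    exact key t ⟨hge, le_refl t⟩
end

section
/- Let $\tau_0>0$ and let $F:[\tau_0,\infty)\to[0,\infty)$ satisfy $\sup_{\tau_0\leq\tau\leq A}F(\tau)<\infty$ for all $A>\tau_0$. If there exist $C_0>0$ and $\gamma\in\mathbb{R}$ such that $\sup_{t/2\leq\tau\leq t}F(\tau)^2\leq C_0 t^{-2\gamma}+C_0 t^{-\gamma}\sup_{t/4\leq\tau\leq t}F(\tau)$ for all $t\geq 4\tau_0$, then $F(t)=O(t^{-\gamma})$ as $t\to\infty$, i.e., there exist $C>0$ and $T>\tau_0$ with $F(t)\leq C t^{-\gamma}$ for all $t\geq T$. -/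
private lemma quad_lemma (C₀ x y B : ℝ) (hC₀ : 0 < C₀) (hx : 0 ≤ x)
    (h : x ^ 2 ≤ C₀ + C₀ * max y x)
    (hB1 : C₀ + Real.sqrt C₀ ≤ B)
    (hB2 : C₀ + C₀ * y ≤ B ^ 2) (hB0 : 0 ≤ B) : x ≤ B := by
  rcases le_total x y with hxy | hxy
  · rw [max_eq_left hxy] at h
    nlinarith
  · rw [max_eq_right hxy] at h
    nlinarith [Real.sq_sqrt hC₀.le, Real.sqrt_nonneg C₀]

/-- Bootstrap lemma for supremum-type recursive inequalities (Lemma `bwp3`). -/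
theorem stmt_1 (τ₀ : ℝ) (hτ₀ : 0 < τ₀) (F : ℝ → ℝ)
    (hFnonneg : ∀ t, τ₀ ≤ t → 0 ≤ F t)
    (hFloc : ∀ A, τ₀ < A → BddAbove (F '' Set.Icc τ₀ A))
    (C₀ : ℝ) (hC₀ : 0 < C₀) (γ : ℝ)
    (hineq : ∀ t, 4 * τ₀ ≤ t → ∀ τ ∈ Set.Icc (t / 2) t,
      (F τ) ^ 2 ≤ C₀ * t ^ (-(2 * γ)) + C₀ * t ^ (-γ) * sSup (F '' Set.Icc (t / 4) t)) :
    ∃ C > 0, ∃ T > τ₀, ∀ t, T ≤ t → F t ≤ C * t ^ (-γ) := by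
  have hbdd : ∀ a b : ℝ, τ₀ ≤ a → BddAbove (F '' Set.Icc a b) := by
    intro a b ha
    exact (hFloc (max b (τ₀ + 1)) (lt_of_lt_of_le (by linarith) (le_max_right _ _))).mono
      (Set.image_mono (Set.Icc_subset_Icc ha (le_max_left _ _)))
  set N : ℝ → ℝ := fun t => sSup (F '' Set.Icc (t / 2) t) with hNdef
  have hmemN : ∀ t, τ₀ ≤ t / 2 → ∀ τ ∈ Set.Icc (t / 2) t, F τ ≤ N t := fun t ht τ hτ =>
    le_csSup (hbdd _ _ ht) (Set.mem_image_of_mem F hτ)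
  have hNnonneg : ∀ t, τ₀ ≤ t / 2 → 0 ≤ N t := by
    intro t ht
    exact le_trans (hFnonneg t (by linarith)) (hmemN t ht t ⟨by linarith, le_refl t⟩)
  -- key quadratic inequality for N
  have hkey : ∀ t, 4 * τ₀ ≤ t →
      (N t) ^ 2 ≤ C₀ * t ^ (-(2 * γ)) + C₀ * t ^ (-γ) * max (N (t / 2)) (N t) := by
    intro t ht
    have ht4 : τ₀ ≤ t / 4 := by linarith
    have ht2 : τ₀ ≤ t / 2 := by linarith
    have hsplit : Set.Icc (t / 4) t = Set.Icc (t / 4) (t / 2) ∪ Set.Icc (t / 2) t :=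
      (Set.Icc_union_Icc_eq_Icc (by linarith) (by linarith)).symm
    have hne1 : (F '' Set.Icc (t / 4) (t / 2)).Nonempty :=
      ⟨F (t / 2), Set.mem_image_of_mem F ⟨by linarith, by linarith⟩⟩
    have hne2 : (F '' Set.Icc (t / 2) t).Nonempty :=
      ⟨F t, Set.mem_image_of_mem F ⟨by linarith, le_refl t⟩⟩
    have hsup : sSup (F '' Set.Icc (t / 4) t) = max (N (t / 2)) (N t) := by
      rw [hsplit, Set.image_union, csSup_union (hbdd _ _ ht4) hne1 (hbdd _ _ ht2) hne2]
      have h24 : t / 2 / 2 = t / 4 := by ring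
      simp only [hNdef, h24]
    have hRHS : ∀ τ ∈ Set.Icc (t / 2) t,
        F τ ^ 2 ≤ C₀ * t ^ (-(2 * γ)) + C₀ * t ^ (-γ) * max (N (t / 2)) (N t) := by
      intro τ hτ
      have := hineq t ht τ hτ
      rwa [hsup] at this
    have hRHS0 : 0 ≤ C₀ * t ^ (-(2 * γ)) + C₀ * t ^ (-γ) * max (N (t / 2)) (N t) :=
      le_trans (sq_nonneg (F t)) (hRHS t ⟨by linarith, le_refl t⟩)
    have hNle : N t ≤ Real.sqrt (C₀ * t ^ (-(2 * γ)) + C₀ * t ^ (-γ) * max (N (t / 2)) (N t)) := by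
      apply csSup_le hne2
      rintro x ⟨τ, hτ, rfl⟩
      have h1 := hRHS τ hτ
      have h2 : 0 ≤ F τ := hFnonneg τ (le_trans ht2 hτ.1)
      nlinarith [Real.sq_sqrt hRHS0, Real.sqrt_nonneg
        (C₀ * t ^ (-(2 * γ)) + C₀ * t ^ (-γ) * max (N (t / 2)) (N t))]
    calc (N t) ^ 2 ≤ (Real.sqrt (C₀ * t ^ (-(2 * γ)) + C₀ * t ^ (-γ) * max (N (t / 2)) (N t))) ^ 2 :=
          pow_le_pow_left₀ (hNnonneg t ht2) hNle 2
      _ = _ := Real.sq_sqrt hRHS0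
  -- constants
  have ht0pos : (0:ℝ) < 4 * τ₀ := by linarith
  have hm : (0:ℝ) < (2:ℝ) ^ γ := Real.rpow_pos_of_pos two_pos γ
  have ha0 : 0 ≤ (4 * τ₀) ^ γ * N (4 * τ₀) := by
    have := hNnonneg (4 * τ₀) (by linarith)
    positivity
  set B : ℝ := (4 * τ₀) ^ γ * N (4 * τ₀) + C₀ + Real.sqrt C₀ + C₀ * (2:ℝ) ^ γ with hBdef
  have hBpos : 0 < B := by
    have := Real.sqrt_nonneg C₀
    have : 0 < C₀ * (2:ℝ) ^ γ := by positivity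
    rw [hBdef]; nlinarith [Real.sqrt_nonneg C₀]
  have hB1 : C₀ + Real.sqrt C₀ ≤ B := by
    rw [hBdef]; nlinarith
  have hB2 : C₀ + C₀ * ((2:ℝ) ^ γ * B) ≤ B ^ 2 := by
    have hsB : Real.sqrt C₀ ≤ B := by
      rw [hBdef]; nlinarith [Real.sqrt_nonneg C₀]
    have hsmB : Real.sqrt C₀ + C₀ * (2:ℝ) ^ γ ≤ B := by
      rw [hBdef]; nlinarith [Real.sqrt_nonneg C₀]
    have h1 : (Real.sqrt C₀ + C₀ * (2:ℝ) ^ γ) * B ≤ B * B :=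
      mul_le_mul_of_nonneg_right hsmB hBpos.le
    have h2 : C₀ ≤ Real.sqrt C₀ * B := by
      have := mul_le_mul_of_nonneg_left hsB (Real.sqrt_nonneg C₀)
      nlinarith [Real.sq_sqrt hC₀.le]
    nlinarith
  -- main induction : N at dyadic points
  have claim : ∀ k : ℕ, ((4 * τ₀) * 2 ^ k) ^ γ * N ((4 * τ₀) * 2 ^ k) ≤ B := by
    intro k
    induction k with
    | zero =>
      simp only [pow_zero, mul_one]
      rw [hBdef]
      nlinarith [Real.sqrt_nonneg C₀]
    | succ k ih =>
      set s := (4 * τ₀) * 2 ^ k with hs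
      have hspos : 0 < s := by positivity
      have hs4 : 4 * τ₀ ≤ s := by
        have : (1:ℝ) ≤ 2 ^ k := one_le_pow₀ one_le_two
        nlinarith
      have hts : (4 * τ₀) * 2 ^ (k + 1) = 2 * s := by rw [hs]; ring
      set t := (4 * τ₀) * 2 ^ (k + 1) with htd
      have htpos : 0 < t := by positivity
      have ht4 : 4 * τ₀ ≤ t := by rw [hts]; linarith
      have hhalf : t / 2 = s := by rw [hts]; ring
      have hk := hkey t ht4
      rw [hhalf] at hk
      set u := t ^ γ with hu
      have hupos : 0 < u := Real.rpow_pos_of_pos htpos γ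
      have huv : u * t ^ (-γ) = 1 := by
        rw [hu, ← Real.rpow_add htpos]; simp
      have huv2 : u ^ 2 * t ^ (-(2 * γ)) = 1 := by
        have hu2 : u ^ 2 = t ^ (2 * γ) := by
          rw [hu, ← Real.rpow_natCast (t ^ γ) 2, ← Real.rpow_mul htpos.le]
          norm_num [mul_comm]
        rw [hu2, ← Real.rpow_add htpos]
        norm_num
      have hNs0 : 0 ≤ N s := hNnonneg s (by linarith)
      have hNt0 : 0 ≤ N t := by
        apply hNnonneg t
        rw [hhalf]; linarith
      have hus : u * N s ≤ (2:ℝ) ^ γ * B := by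
        have hu2s : u = (2:ℝ) ^ γ * s ^ γ := by
          rw [hu, hts, Real.mul_rpow (by norm_num) hspos.le]
        rw [hu2s, mul_assoc]
        exact mul_le_mul_of_nonneg_left ih hm.le
      have hmax : u * max (N s) (N t) ≤ max ((2:ℝ) ^ γ * B) (u * N t) := by
        rw [mul_max_of_nonneg _ _ hupos.le]
        exact max_le_max hus le_rfl
      have hmain : (u * N t) ^ 2 ≤ C₀ + C₀ * max ((2:ℝ) ^ γ * B) (u * N t) := by
        have step : u ^ 2 * (N t) ^ 2 ≤
            u ^ 2 * (C₀ * t ^ (-(2 * γ)) + C₀ * t ^ (-γ) * max (N s) (N t)) :=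
          mul_le_mul_of_nonneg_left hk (sq_nonneg u)
        have expand : u ^ 2 * (C₀ * t ^ (-(2 * γ)) + C₀ * t ^ (-γ) * max (N s) (N t))
            = C₀ * (u ^ 2 * t ^ (-(2 * γ)))
              + C₀ * ((u * t ^ (-γ)) * (u * max (N s) (N t))) := by ring
        have step2 : (u * N t) ^ 2 ≤ C₀ + C₀ * (u * max (N s) (N t)) := by
          calc (u * N t) ^ 2 = u ^ 2 * (N t) ^ 2 := by ring
            _ ≤ _ := step
            _ = C₀ * (u ^ 2 * t ^ (-(2 * γ)))
                + C₀ * ((u * t ^ (-γ)) * (u * max (N s) (N t))) := expand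
            _ = C₀ + C₀ * (u * max (N s) (N t)) := by rw [huv2, huv]; ring
        have := mul_le_mul_of_nonneg_left hmax hC₀.le
        linarith
      exact quad_lemma C₀ (u * N t) ((2:ℝ) ^ γ * B) B hC₀
        (mul_nonneg hupos.le hNt0) hmain hB1 hB2 hBpos.le
  -- pointwise dyadic bound
  set C : ℝ := B * max 1 ((2:ℝ) ^ (-γ)) with hCdef
  have hCB : B ≤ C := by
    rw [hCdef]
    nlinarith [le_max_left (1:ℝ) ((2:ℝ) ^ (-γ))]
  have hNtoF : ∀ t, 4 * τ₀ ≤ t → N t ≤ B * t ^ (-γ) → ∀ τ ∈ Set.Icc (t / 2) t,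
      F τ ≤ B * t ^ (-γ) := by
    intro t ht hN τ hτ
    exact le_trans (hmemN t (by linarith) τ hτ) hN
  have hclaim' : ∀ k : ℕ, N ((4 * τ₀) * 2 ^ k) ≤ B * ((4 * τ₀) * 2 ^ k) ^ (-γ) := by
    intro k
    have htpos : (0:ℝ) < (4 * τ₀) * 2 ^ k := by positivity
    have hupos : (0:ℝ) < ((4 * τ₀) * 2 ^ k) ^ γ := Real.rpow_pos_of_pos htpos γ
    have huv : ((4 * τ₀) * 2 ^ k) ^ γ * ((4 * τ₀) * 2 ^ k) ^ (-γ) = 1 := by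
      rw [← Real.rpow_add htpos]; simp
    have := claim k
    have := mul_le_mul_of_nonneg_left this (le_of_lt (Real.rpow_pos_of_pos htpos (-γ)))
    calc N ((4 * τ₀) * 2 ^ k)
        = (((4 * τ₀) * 2 ^ k) ^ (-γ) * ((4 * τ₀) * 2 ^ k) ^ γ) * N ((4 * τ₀) * 2 ^ k) := by
          rw [mul_comm (((4 * τ₀) * 2 ^ k) ^ (-γ)), huv, one_mul]
      _ = ((4 * τ₀) * 2 ^ k) ^ (-γ) * (((4 * τ₀) * 2 ^ k) ^ γ * N ((4 * τ₀) * 2 ^ k)) := by ring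
      _ ≤ ((4 * τ₀) * 2 ^ k) ^ (-γ) * B := this
      _ = B * ((4 * τ₀) * 2 ^ k) ^ (-γ) := by ring
  -- transfer dyadic bound to all points
  have hdecay : ∀ k : ℕ, ∀ t : ℝ, 4 * τ₀ ≤ t → t ≤ (4 * τ₀) * 2 ^ k → F t ≤ C * t ^ (-γ) := by
    intro k
    induction k with
    | zero =>
      intro t ht1 ht2
      simp only [pow_zero, mul_one] at ht2
      have hteq : t = 4 * τ₀ := le_antisymm ht2 ht1
      subst hteq
      have h0 := hclaim' 0
      simp only [pow_zero, mul_one] at h0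
      have hF : F (4 * τ₀) ≤ N (4 * τ₀) :=
        hmemN (4 * τ₀) (by linarith) (4 * τ₀) ⟨by linarith, le_refl _⟩
      have hrp : (0:ℝ) < (4 * τ₀) ^ (-γ) := Real.rpow_pos_of_pos ht0pos (-γ)
      nlinarith
    | succ k ih =>
      intro t ht1 ht2
      rcases le_or_gt t ((4 * τ₀) * 2 ^ k) with h | h
      · exact ih t ht1 h
      · set tk1 := (4 * τ₀) * 2 ^ (k + 1) with htk1
        have htks : tk1 = 2 * ((4 * τ₀) * 2 ^ k) := by rw [htk1]; ring
        have htk1pos : 0 < tk1 := by positivity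
        have htpos : 0 < t := by linarith
        have hthalf : tk1 / 2 ≤ t := by rw [htks]; linarith
        have ht4 : 4 * τ₀ ≤ tk1 := by
          have : (1:ℝ) ≤ 2 ^ (k+1) := one_le_pow₀ one_le_two
          rw [htk1]; nlinarith
        have hF : F t ≤ N tk1 := by
          apply hmemN tk1 (by rw [htks]; ring_nf; nlinarith [one_le_pow₀ (one_le_two (α := ℝ)) (n := k)]) t ⟨hthalf, ht2⟩
        have hN := hclaim' (k + 1)
        rw [← htk1] at hN
        have htk1t : tk1 ≤ 2 * t := by rw [htks]; linarith
        -- tk1 ^ (-γ) ≤ max 1 (2^(-γ)) * t ^ (-γ)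
        have hbase : tk1 ^ (-γ) ≤ max 1 ((2:ℝ) ^ (-γ)) * t ^ (-γ) := by
          rcases le_or_gt 0 γ with hγ | hγ
          · have h1 : t ^ γ ≤ tk1 ^ γ := Real.rpow_le_rpow htpos.le (le_trans ht2 le_rfl) hγ
            have h2 : tk1 ^ (-γ) ≤ t ^ (-γ) := by
              rw [Real.rpow_neg htpos.le, Real.rpow_neg htk1pos.le]
              exact inv_anti₀ (Real.rpow_pos_of_pos htpos γ) h1
            calc tk1 ^ (-γ) ≤ t ^ (-γ) := h2
              _ = 1 * t ^ (-γ) := (one_mul _).symm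
              _ ≤ max 1 ((2:ℝ) ^ (-γ)) * t ^ (-γ) :=
                  mul_le_mul_of_nonneg_right (le_max_left _ _)
                    (Real.rpow_pos_of_pos htpos (-γ)).le
          · have hγ' : 0 ≤ -γ := by linarith
            have h1 : tk1 ^ (-γ) ≤ (2 * t) ^ (-γ) :=
              Real.rpow_le_rpow htk1pos.le htk1t hγ'
            have h2 : (2 * t) ^ (-γ) = (2:ℝ) ^ (-γ) * t ^ (-γ) :=
              Real.mul_rpow (by norm_num) htpos.le
            calc tk1 ^ (-γ) ≤ (2:ℝ) ^ (-γ) * t ^ (-γ) := by rw [← h2]; exact h1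
              _ ≤ max 1 ((2:ℝ) ^ (-γ)) * t ^ (-γ) :=
                  mul_le_mul_of_nonneg_right (le_max_right _ _)
                    (Real.rpow_pos_of_pos htpos (-γ)).le
        calc F t ≤ N tk1 := hF
          _ ≤ B * tk1 ^ (-γ) := hN
          _ ≤ B * (max 1 ((2:ℝ) ^ (-γ)) * t ^ (-γ)) :=
              mul_le_mul_of_nonneg_left hbase hBpos.le
          _ = C * t ^ (-γ) := by rw [hCdef]; ring
  -- conclusion
  have hCpos : 0 < C := by
    rw [hCdef]
    have : (0:ℝ) < max 1 ((2:ℝ) ^ (-γ)) := lt_of_lt_of_le one_pos (le_max_left _ _)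
    positivity
  refine ⟨C, hCpos, 4 * τ₀, by linarith, ?_⟩
  intro t ht
  obtain ⟨k, hk⟩ := pow_unbounded_of_one_lt (t / (4 * τ₀)) (one_lt_two (α := ℝ))
  have : t ≤ (4 * τ₀) * 2 ^ k := by
    rw [div_lt_iff₀ ht0pos] at hk
    nlinarith
  exact hdecay k t ht this
end

section
/- There exists a constant $C>0$ such that for all $t\geq 0$, $\int_0^t (t-s)^{-3/4} s^{-1/4}(1+s)^{-1/2}\,ds \leq C(1+t)^{-1/2}$. -/
open MeasureTheory intervalIntegral Set

/-- Helper: `a^{-1/2} ≤ c * b^{-1/2}` when `b ≤ c² a`. -/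
lemma aux_rpow_half {a b c : ℝ} (ha : 0 < a) (hb : 0 < b) (hc : 0 < c)
    (h : b ≤ c ^ 2 * a) : a ^ (-(1 : ℝ)/2) ≤ c * b ^ (-(1 : ℝ)/2) := by
  have hX : (0:ℝ) < a ^ ((1:ℝ)/2) := Real.rpow_pos_of_pos ha _
  have hY : (0:ℝ) < b ^ ((1:ℝ)/2) := Real.rpow_pos_of_pos hb _
  have key : b ^ ((1:ℝ)/2) ≤ c * a ^ ((1:ℝ)/2) := by
    have h1 : b ^ ((1:ℝ)/2) ≤ (c ^ 2 * a) ^ ((1:ℝ)/2) :=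
      Real.rpow_le_rpow hb.le h (by norm_num)
    have h2 : (c ^ 2 * a) ^ ((1:ℝ)/2) = c * a ^ ((1:ℝ)/2) := by
      rw [Real.mul_rpow (by positivity) ha.le, ← Real.rpow_natCast c 2,
        ← Real.rpow_mul hc.le]
      norm_num
    linarith [h2 ▸ h1]
  have ea : a ^ (-(1:ℝ)/2) = (a ^ ((1:ℝ)/2))⁻¹ := by
    rw [show -(1:ℝ)/2 = -(1/2) by ring, Real.rpow_neg ha.le]
  have eb : b ^ (-(1:ℝ)/2) = (b ^ ((1:ℝ)/2))⁻¹ := by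
    rw [show -(1:ℝ)/2 = -(1/2) by ring, Real.rpow_neg hb.le]
  rw [ea, eb, inv_eq_one_div,
    show c * (b ^ ((1:ℝ)/2))⁻¹ = c / b ^ ((1:ℝ)/2) by ring,
    div_le_div_iff₀ hX hY]
  nlinarith

set_option maxHeartbeats 800000 in
/-- Weighted singular convolution estimate:
`∫_0^t (t-s)^{-3/4} s^{-1/4} (1+s)^{-1/2} ds ≤ C (1+t)^{-1/2}`. -/
theorem stmt_7 :
    ∃ C > 0, ∀ t : ℝ, 0 ≤ t →
      (∫ s in (0 : ℝ)..t, (t - s) ^ (-(3 : ℝ) / 4) * s ^ (-(1 : ℝ) / 4) * (1 + s) ^ (-(1 : ℝ) / 2))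
        ≤ C * (1 + t) ^ (-(1 : ℝ) / 2) := by
  refine ⟨16, by norm_num, fun t ht0 => ?_⟩
  rcases eq_or_lt_of_le ht0 with h0 | ht
  · rw [← h0]
    rw [intervalIntegral.integral_same]
    positivity
  set f : ℝ → ℝ := fun s =>
    (t - s) ^ (-(3 : ℝ) / 4) * s ^ (-(1 : ℝ) / 4) * (1 + s) ^ (-(1 : ℝ) / 2) with hf
  have ht2 : (0:ℝ) < t / 2 := by linarith
  have hmeas : Measurable f := by
    exact (((measurable_const.sub measurable_id).pow measurable_const).mul
      (measurable_id.pow measurable_const)).mul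
      ((measurable_const.add measurable_id).pow measurable_const)
  -- pointwise bounds on the first half
  have hb1 : ∀ x ∈ Icc (0:ℝ) (t/2),
      f x ≤ (t/2) ^ (-(3:ℝ)/4) * x ^ (-(1:ℝ)/4) := by
    rintro x ⟨hx0, hx2⟩
    rcases eq_or_lt_of_le hx0 with h | hx
    · simp [hf, ← h, Real.zero_rpow (by norm_num : (-(1:ℝ)/4) ≠ 0)]
    have hA : (t - x) ^ (-(3:ℝ)/4) ≤ (t/2) ^ (-(3:ℝ)/4) :=
      Real.rpow_le_rpow_of_nonpos ht2 (by linarith) (by norm_num)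
    have hC : (1 + x) ^ (-(1:ℝ)/2) ≤ 1 := by
      rw [show -(1:ℝ)/2 = -(1/2) by ring]
      exact Real.rpow_le_one_of_one_le_of_nonpos (by linarith) (by norm_num)
    have hB : (0:ℝ) ≤ x ^ (-(1:ℝ)/4) := Real.rpow_nonneg hx.le _
    have hC0 : (0:ℝ) ≤ (1 + x) ^ (-(1:ℝ)/2) := Real.rpow_nonneg (by linarith) _
    have hA0 : (0:ℝ) ≤ (t/2) ^ (-(3:ℝ)/4) := Real.rpow_nonneg ht2.le _
    calc f x ≤ (t/2) ^ (-(3:ℝ)/4) * x ^ (-(1:ℝ)/4) * (1 + x) ^ (-(1:ℝ)/2) := by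
          exact mul_le_mul_of_nonneg_right (mul_le_mul_of_nonneg_right hA hB) hC0
      _ ≤ (t/2) ^ (-(3:ℝ)/4) * x ^ (-(1:ℝ)/4) * 1 :=
          mul_le_mul_of_nonneg_left hC (by positivity)
      _ = (t/2) ^ (-(3:ℝ)/4) * x ^ (-(1:ℝ)/4) := by ring
  have hb1b : ∀ x ∈ Icc (0:ℝ) (t/2),
      f x ≤ (t/2) ^ (-(3:ℝ)/4) * x ^ (-(3:ℝ)/4) := by
    rintro x ⟨hx0, hx2⟩
    rcases eq_or_lt_of_le hx0 with h | hx
    · simp [hf, ← h, Real.zero_rpow (by norm_num : (-(1:ℝ)/4) ≠ 0),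
        Real.zero_rpow (by norm_num : (-(3:ℝ)/4) ≠ 0)]
    have hA : (t - x) ^ (-(3:ℝ)/4) ≤ (t/2) ^ (-(3:ℝ)/4) :=
      Real.rpow_le_rpow_of_nonpos ht2 (by linarith) (by norm_num)
    have hC : (1 + x) ^ (-(1:ℝ)/2) ≤ x ^ (-(1:ℝ)/2) :=
      Real.rpow_le_rpow_of_nonpos hx (by linarith) (by norm_num)
    have hB : (0:ℝ) ≤ x ^ (-(1:ℝ)/4) := Real.rpow_nonneg hx.le _
    have hC0 : (0:ℝ) ≤ (1 + x) ^ (-(1:ℝ)/2) := Real.rpow_nonneg (by linarith) _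
    have hmul : x ^ (-(1:ℝ)/4) * x ^ (-(1:ℝ)/2) = x ^ (-(3:ℝ)/4) := by
      rw [← Real.rpow_add hx]; norm_num
    calc f x ≤ (t/2) ^ (-(3:ℝ)/4) * x ^ (-(1:ℝ)/4) * (1 + x) ^ (-(1:ℝ)/2) :=
          mul_le_mul_of_nonneg_right (mul_le_mul_of_nonneg_right hA hB) hC0
      _ ≤ (t/2) ^ (-(3:ℝ)/4) * x ^ (-(1:ℝ)/4) * x ^ (-(1:ℝ)/2) :=
          mul_le_mul_of_nonneg_left hC (by positivity)
      _ = (t/2) ^ (-(3:ℝ)/4) * x ^ (-(3:ℝ)/4) := by rw [mul_assoc, hmul]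
  -- pointwise bound on the second half
  set c2 : ℝ := (t/2) ^ (-(1:ℝ)/4) * (1 + t/2) ^ (-(1:ℝ)/2) with hc2
  have hb2 : ∀ x ∈ Icc (t/2) t, f x ≤ c2 * (t - x) ^ (-(3:ℝ)/4) := by
    rintro x ⟨hx1, hx2⟩
    have hA0 : (0:ℝ) ≤ (t - x) ^ (-(3:ℝ)/4) := Real.rpow_nonneg (by linarith) _
    have hB : x ^ (-(1:ℝ)/4) ≤ (t/2) ^ (-(1:ℝ)/4) :=
      Real.rpow_le_rpow_of_nonpos ht2 hx1 (by norm_num)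
    have hC : (1 + x) ^ (-(1:ℝ)/2) ≤ (1 + t/2) ^ (-(1:ℝ)/2) :=
      Real.rpow_le_rpow_of_nonpos (by linarith) (by linarith) (by norm_num)
    have hC0 : (0:ℝ) ≤ (1 + x) ^ (-(1:ℝ)/2) := Real.rpow_nonneg (by linarith) _
    have hB0 : (0:ℝ) ≤ x ^ (-(1:ℝ)/4) := Real.rpow_nonneg (by linarith) _
    calc f x ≤ (t - x) ^ (-(3:ℝ)/4) * (t/2) ^ (-(1:ℝ)/4) * (1 + x) ^ (-(1:ℝ)/2) :=
          mul_le_mul_of_nonneg_right (mul_le_mul_of_nonneg_left hB hA0) hC0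
      _ ≤ (t - x) ^ (-(3:ℝ)/4) * (t/2) ^ (-(1:ℝ)/4) * (1 + t/2) ^ (-(1:ℝ)/2) :=
          mul_le_mul_of_nonneg_left hC (by positivity)
      _ = c2 * (t - x) ^ (-(3:ℝ)/4) := by rw [hc2]; ring
  -- nonnegativity of f on relevant sets
  have hfz : ∀ x, 0 ≤ x → x ≤ t → ‖f x‖ = f x := by
    intro x hx1 hx2
    rw [Real.norm_eq_abs, abs_of_nonneg]
    exact mul_nonneg (mul_nonneg (Real.rpow_nonneg (by linarith) _)
      (Real.rpow_nonneg hx1 _)) (Real.rpow_nonneg (by linarith) _)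
  -- integrability pieces
  have hg1 : IntervalIntegrable (fun s : ℝ => (t/2) ^ (-(3:ℝ)/4) * s ^ (-(1:ℝ)/4))
      volume 0 (t/2) := (intervalIntegrable_rpow' (by norm_num)).const_mul _
  have hg1b : IntervalIntegrable (fun s : ℝ => (t/2) ^ (-(3:ℝ)/4) * s ^ (-(3:ℝ)/4))
      volume 0 (t/2) := (intervalIntegrable_rpow' (by norm_num)).const_mul _
  have hint1 : IntervalIntegrable f volume 0 (t/2) := by
    apply hg1.mono_fun' (hmeas.aestronglyMeasurable.restrict)
    filter_upwards [ae_restrict_mem measurableSet_uIoc] with x hx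
    rw [Set.uIoc_of_le ht2.le] at hx
    rw [hfz x hx.1.le (by linarith [hx.2])]
    exact hb1 x ⟨hx.1.le, hx.2⟩
  have hg2 : IntervalIntegrable (fun x : ℝ => (t - x) ^ (-(3:ℝ)/4)) volume (t/2) t := by
    have h := (intervalIntegrable_rpow' (a := 0) (b := t/2)
      (r := -(3:ℝ)/4) (by norm_num)).comp_sub_left t
    rw [sub_zero, show t - t/2 = t/2 by ring] at h
    exact h.symm
  have hint2 : IntervalIntegrable f volume (t/2) t := by
    apply (hg2.const_mul c2).mono_fun' (hmeas.aestronglyMeasurable.restrict)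
    filter_upwards [ae_restrict_mem measurableSet_uIoc] with x hx
    rw [Set.uIoc_of_le (by linarith : t/2 ≤ t)] at hx
    rw [hfz x (by linarith [hx.1]) hx.2]
    exact hb2 x ⟨hx.1.le, hx.2⟩
  -- integral computations
  have hpow0 : (t/2) ^ (-(3:ℝ)/4) * (t/2) ^ (-(1:ℝ)/4 + 1) = 1 := by
    rw [← Real.rpow_add ht2, show -(3:ℝ)/4 + (-(1:ℝ)/4 + 1) = 0 by ring, Real.rpow_zero]
  have I1 : (∫ s in (0:ℝ)..(t/2), (t/2) ^ (-(3:ℝ)/4) * s ^ (-(1:ℝ)/4)) = 4/3 := by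
    rw [intervalIntegral.integral_const_mul, integral_rpow (Or.inl (by norm_num)),
      Real.zero_rpow (by norm_num), sub_zero,
      show (t/2) ^ (-(3:ℝ)/4) * ((t/2) ^ (-(1:ℝ)/4 + 1) / (-(1:ℝ)/4 + 1))
        = ((t/2) ^ (-(3:ℝ)/4) * (t/2) ^ (-(1:ℝ)/4 + 1)) / (-(1:ℝ)/4 + 1) by ring,
      hpow0]
    norm_num
  have hpow1 : (t/2) ^ (-(3:ℝ)/4) * (t/2) ^ (-(3:ℝ)/4 + 1) = (t/2) ^ (-(1:ℝ)/2) := by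
    rw [← Real.rpow_add ht2]; norm_num
  have I1b : (∫ s in (0:ℝ)..(t/2), (t/2) ^ (-(3:ℝ)/4) * s ^ (-(3:ℝ)/4))
      = 4 * (t/2) ^ (-(1:ℝ)/2) := by
    rw [intervalIntegral.integral_const_mul, integral_rpow (Or.inl (by norm_num)),
      Real.zero_rpow (by norm_num), sub_zero,
      show (t/2) ^ (-(3:ℝ)/4) * ((t/2) ^ (-(3:ℝ)/4 + 1) / (-(3:ℝ)/4 + 1))
        = ((t/2) ^ (-(3:ℝ)/4) * (t/2) ^ (-(3:ℝ)/4 + 1)) / (-(3:ℝ)/4 + 1) by ring,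
      hpow1]
    norm_num
    ring
  have I2 : (∫ s in (t/2)..t, (t - s) ^ (-(3:ℝ)/4)) = 4 * (t/2) ^ ((1:ℝ)/4) := by
    rw [show (∫ s in (t/2)..t, (t - s) ^ (-(3:ℝ)/4))
        = ∫ x in (t - t)..(t - t/2), x ^ (-(3:ℝ)/4) from
      intervalIntegral.integral_comp_sub_left (fun x => x ^ (-(3:ℝ)/4)) t,
      show t - t = 0 by ring, show t - t/2 = t/2 by ring,
      integral_rpow (Or.inl (by norm_num)), Real.zero_rpow (by norm_num), sub_zero,
      show -(3:ℝ)/4 + 1 = 1/4 by norm_num]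
    ring
  -- part bounds
  have P1a : (∫ s in (0:ℝ)..(t/2), f s) ≤ 4/3 :=
    le_of_le_of_eq (integral_mono_on ht2.le hint1 hg1 hb1) I1
  have P1b : (∫ s in (0:ℝ)..(t/2), f s) ≤ 4 * (t/2) ^ (-(1:ℝ)/2) :=
    le_of_le_of_eq (integral_mono_on ht2.le hint1 hg1b hb1b) I1b
  have hpow2 : (t/2) ^ (-(1:ℝ)/4) * (t/2) ^ ((1:ℝ)/4) = 1 := by
    rw [← Real.rpow_add ht2, show -(1:ℝ)/4 + (1:ℝ)/4 = 0 by ring, Real.rpow_zero]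
  have P2 : (∫ s in (t/2)..t, f s) ≤ 4 * (1 + t/2) ^ (-(1:ℝ)/2) := by
    have h1 : (∫ s in (t/2)..t, f s) ≤ ∫ s in (t/2)..t, c2 * (t - s) ^ (-(3:ℝ)/4) :=
      integral_mono_on (by linarith) hint2 (hg2.const_mul c2) hb2
    have h2 : (∫ s in (t/2)..t, c2 * (t - s) ^ (-(3:ℝ)/4))
        = c2 * (4 * (t/2) ^ ((1:ℝ)/4)) := by
      rw [intervalIntegral.integral_const_mul, I2]
    rw [h2, hc2] at h1
    calc (∫ s in (t/2)..t, f s)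
        ≤ (t/2) ^ (-(1:ℝ)/4) * (1 + t/2) ^ (-(1:ℝ)/2) * (4 * (t/2) ^ ((1:ℝ)/4)) := h1
      _ = 4 * (1 + t/2) ^ (-(1:ℝ)/2) := by
          rw [show (t/2) ^ (-(1:ℝ)/4) * (1 + t/2) ^ (-(1:ℝ)/2) * (4 * (t/2) ^ ((1:ℝ)/4))
            = ((t/2) ^ (-(1:ℝ)/4) * (t/2) ^ ((1:ℝ)/4)) * (4 * (1 + t/2) ^ (-(1:ℝ)/2)) by ring,
            hpow2, one_mul]
  -- splitting
  have hsplit : (∫ s in (0:ℝ)..t, f s)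
      = (∫ s in (0:ℝ)..(t/2), f s) + ∫ s in (t/2)..t, f s :=
    (intervalIntegral.integral_add_adjacent_intervals hint1 hint2).symm
  -- final comparisons
  have hcomp2 : (1 + t/2) ^ (-(1:ℝ)/2) ≤ (3/2) * (1 + t) ^ (-(1:ℝ)/2) :=
    aux_rpow_half (by linarith) (by linarith) (by norm_num) (by norm_num; linarith)
  have hRpos : (0:ℝ) ≤ (1 + t) ^ (-(1:ℝ)/2) := Real.rpow_nonneg (by linarith) _
  show (∫ s in (0:ℝ)..t, f s) ≤ 16 * (1 + t) ^ (-(1:ℝ)/2)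
  rw [hsplit]
  rcases le_total t 1 with h1 | h1
  · have hcomp1 : (1:ℝ) ≤ (3/2) * (1 + t) ^ (-(1:ℝ)/2) := by
      have := aux_rpow_half (a := 1) (b := 1 + t) (c := 3/2)
        one_pos (by linarith) (by norm_num) (by norm_num; linarith)
      rwa [Real.one_rpow] at this
    linarith
  · have hcomp1 : (t/2) ^ (-(1:ℝ)/2) ≤ 2 * (1 + t) ^ (-(1:ℝ)/2) :=
      aux_rpow_half ht2 (by linarith) (by norm_num) (by norm_num; linarith)
    linarith
end

section
/- Let $a>0$, $\mu>0$ with $a>2\mu$, and $C(a)>0$. Suppose $G:[1,\infty)\to[0,\infty)$ is continuously differentiable and satisfies $G'(t)\leq C(a)\,t^{-2\mu/a}\,G(t)^{(a-1)/a}+C(a)\,t^{-1/2-\mu/a}\,G(t)^{(2a-1)/(2a)}$ for all $t\geq 1$, with $G(1)\leq K_0$. Then there is a constant $C^*$ depending on $a,\mu,C(a),K_0$ such that $G(t)\leq C^* t^{a-2\mu}$ for all $t\geq 1$. -/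
open Set Real

/-- Specialized Gronwall-type lemma for the weighted temperature estimate:
`G' ≤ C(a) t^{-2μ/a} G^{(a-1)/a} + C(a) t^{-1/2-μ/a} G^{(2a-1)/(2a)}` implies
`G(t) ≤ C* t^{a-2μ}`. -/
theorem stmt_15 (a μ Ca K₀ : ℝ) (ha : 0 < a) (hμ : 0 < μ) (haμ : 2 * μ < a)
    (hCa : 0 < Ca) (hK₀ : 0 ≤ K₀)
    (G G' : ℝ → ℝ)
    (hGnonneg : ∀ t, 1 ≤ t → 0 ≤ G t)
    (hGderiv : ∀ t, 1 ≤ t → HasDerivAt G (G' t) t)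
    (hG'cont : ContinuousOn G' (Set.Ici 1))
    (hineq : ∀ t, 1 ≤ t →
      G' t ≤ Ca * t ^ (-(2 * μ / a)) * (G t) ^ ((a - 1) / a)
        + Ca * t ^ (-(1 / 2) - μ / a) * (G t) ^ ((2 * a - 1) / (2 * a)))
    (hinit : G 1 ≤ K₀) :
    ∃ Cstar : ℝ, ∀ t, 1 ≤ t → G t ≤ Cstar * t ^ (a - 2 * μ) := by
  have ha2μ : 0 < a - 2 * μ := by linarith
  set N : ℝ := 2 * Ca / (a - 2 * μ) + 1 with hN
  have hNC : 2 * Ca / (a - 2 * μ) < N := by simp [hN]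
  have hN1 : 1 ≤ N := by
    have h : 0 < 2 * Ca / (a - 2 * μ) := by positivity
    simp only [hN]; linarith
  set M : ℝ := max K₀ (N ^ (2 * a)) with hM
  have hNM : N ^ (2 * a) ≤ M := le_max_right _ _
  have hM1 : 1 ≤ M := le_trans (Real.one_le_rpow hN1 (by positivity)) hNM
  have hMpos : 0 < M := lt_of_lt_of_le one_pos hM1
  -- key : M^(1/(2a)) > 2Ca/(a-2μ)
  have hroot : 2 * Ca / (a - 2 * μ) < M ^ (1 / (2 * a)) := by
    have hexp : 2 * a * (1 / (2 * a)) = 1 := by field_simp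
    have h0 : N = (N ^ (2 * a)) ^ (1 / (2 * a)) := by
      rw [← Real.rpow_mul (by linarith), hexp, Real.rpow_one]
    have h1 : N ≤ M ^ (1 / (2 * a)) := by
      rw [h0]
      exact Real.rpow_le_rpow (by positivity) hNM (by positivity)
    linarith
  -- the supersolution coefficient inequality
  have hsup : Ca * M ^ ((a - 1) / a) + Ca * M ^ ((2 * a - 1) / (2 * a))
      < (a - 2 * μ) * M := by
    have hle : M ^ ((a - 1) / a) ≤ M ^ ((2 * a - 1) / (2 * a)) := by
      apply Real.rpow_le_rpow_of_exponent_le hM1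
      rw [div_le_div_iff₀ ha (by linarith)]
      nlinarith
    have hexp2 : (2 * a - 1) / (2 * a) + 1 / (2 * a) = 1 := by field_simp; ring
    have hsplit : M = M ^ ((2 * a - 1) / (2 * a)) * M ^ (1 / (2 * a)) := by
      rw [← Real.rpow_add hMpos, hexp2, Real.rpow_one]
    have hMθpos : 0 < M ^ ((2 * a - 1) / (2 * a)) := Real.rpow_pos_of_pos hMpos _
    have h2 : 2 * Ca < (a - 2 * μ) * M ^ (1 / (2 * a)) := by
      rw [div_lt_iff₀ ha2μ] at hroot
      linarith [hroot]
    calc Ca * M ^ ((a - 1) / a) + Ca * M ^ ((2 * a - 1) / (2 * a))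
        ≤ 2 * Ca * M ^ ((2 * a - 1) / (2 * a)) := by nlinarith
      _ < (a - 2 * μ) * M ^ (1 / (2 * a)) * M ^ ((2 * a - 1) / (2 * a)) :=
          mul_lt_mul_of_pos_right h2 hMθpos
      _ = (a - 2 * μ) * M := by
          rw [mul_assoc, ← Real.rpow_add hMpos, add_comm, hexp2, Real.rpow_one]
  refine ⟨M, fun T hT => ?_⟩
  -- hypotheses of the fencing theorem on [1, T]
  have hcont : ContinuousOn G (Icc (1:ℝ) T) :=
    fun x hx => (hGderiv x hx.1).continuousAt.continuousWithinAt
  have hderiv : ∀ x ∈ Ico (1:ℝ) T, HasDerivWithinAt G (G' x) (Ici x) x :=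
    fun x hx => (hGderiv x hx.1).hasDerivWithinAt
  have hinit' : G 1 ≤ M * (1:ℝ) ^ (a - 2 * μ) := by
    rw [Real.one_rpow, mul_one]
    exact le_trans hinit (le_max_left _ _)
  have hBat : ∀ x : ℝ, 1 ≤ x → HasDerivAt (fun t : ℝ => M * t ^ (a - 2 * μ))
      (M * ((a - 2 * μ) * x ^ (a - 2 * μ - 1))) x := by
    intro x hx
    have hx0 : (0:ℝ) < x := lt_of_lt_of_le one_pos hx
    exact (Real.hasDerivAt_rpow_const (p := a - 2 * μ) (Or.inl hx0.ne')).const_mul M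
  have hBcont : ContinuousOn (fun t : ℝ => M * t ^ (a - 2 * μ)) (Icc (1:ℝ) T) :=
    fun x hx => (hBat x hx.1).continuousAt.continuousWithinAt
  have hBderiv : ∀ x ∈ Ico (1:ℝ) T, HasDerivWithinAt (fun t : ℝ => M * t ^ (a - 2 * μ))
      (M * ((a - 2 * μ) * x ^ (a - 2 * μ - 1))) (Ici x) x :=
    fun x hx => (hBat x hx.1).hasDerivWithinAt
  have hbound : ∀ x ∈ Ico (1:ℝ) T, G x = M * x ^ (a - 2 * μ) →
      G' x < M * ((a - 2 * μ) * x ^ (a - 2 * μ - 1)) := by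
    intro x hx hGx
    have hx1 : (1:ℝ) ≤ x := hx.1
    have hx0 : (0:ℝ) < x := lt_of_lt_of_le one_pos hx1
    have hxp : 0 < x ^ (a - 2 * μ - 1) := Real.rpow_pos_of_pos hx0 _
    have e1 : (G x) ^ ((a - 1) / a)
        = M ^ ((a - 1) / a) * x ^ ((a - 2 * μ) * ((a - 1) / a)) := by
      rw [hGx, Real.mul_rpow hMpos.le (Real.rpow_nonneg hx0.le _),
        ← Real.rpow_mul hx0.le]
    have e2 : (G x) ^ ((2 * a - 1) / (2 * a))
        = M ^ ((2 * a - 1) / (2 * a)) * x ^ ((a - 2 * μ) * ((2 * a - 1) / (2 * a))) := by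
      rw [hGx, Real.mul_rpow hMpos.le (Real.rpow_nonneg hx0.le _),
        ← Real.rpow_mul hx0.le]
    have x1 : x ^ (-(2 * μ / a)) * x ^ ((a - 2 * μ) * ((a - 1) / a))
        = x ^ (a - 2 * μ - 1) := by
      rw [← Real.rpow_add hx0]
      congr 1
      field_simp
      ring
    have x2 : x ^ (-(1 / 2) - μ / a) * x ^ ((a - 2 * μ) * ((2 * a - 1) / (2 * a)))
        = x ^ (a - 2 * μ - 1) := by
      rw [← Real.rpow_add hx0]
      congr 1
      field_simp
      ring
    calc G' x ≤ Ca * x ^ (-(2 * μ / a)) * (G x) ^ ((a - 1) / a)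
          + Ca * x ^ (-(1 / 2) - μ / a) * (G x) ^ ((2 * a - 1) / (2 * a)) :=
        hineq x hx1
      _ = Ca * M ^ ((a - 1) / a) * (x ^ (-(2 * μ / a)) * x ^ ((a - 2 * μ) * ((a - 1) / a)))
          + Ca * M ^ ((2 * a - 1) / (2 * a))
            * (x ^ (-(1 / 2) - μ / a) * x ^ ((a - 2 * μ) * ((2 * a - 1) / (2 * a)))) := by
        rw [e1, e2]; ring
      _ = (Ca * M ^ ((a - 1) / a) + Ca * M ^ ((2 * a - 1) / (2 * a)))
          * x ^ (a - 2 * μ - 1) := by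
        rw [x1, x2]; ring
      _ < ((a - 2 * μ) * M) * x ^ (a - 2 * μ - 1) :=
        mul_lt_mul_of_pos_right hsup hxp
      _ = M * ((a - 2 * μ) * x ^ (a - 2 * μ - 1)) := by ring
  exact image_le_of_deriv_right_lt_deriv_boundary' hcont hderiv hinit' hBcont hBderiv hbound
    ⟨hT, le_refl T⟩
end
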